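/- Profit decomposition identity: suppose for generator g the dual relations of the SOCP market clearing hold, together with all complementary slackness conditions (8a)-(8g). Then the nonlinear profit term Σ_t Σ_{i∈I_g} (λ_i^{P,t} P_g^t + λ_i^{Q,t} Q_g^t) equals the linear expression Σ_t [ -μ̲_{Q_g^t} Q̲_g + μ̄_{Q_g^t} Q̄_g + C_g^Q Q_g^t + Σ_u (μ̄_{P_g^{u,t}} P̄_g^u + C'^{u,t}_{g,P} P_g^{u,t}) + μ̲_{P_g^{r,t}} R_g^d + μ̄_{P_g^{r,t}} R_g^u - μ̲_g^{P,t} P̲_g + μ̄_g^{P,t} P̄_g ]. -/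
import Mathlib


open Finset

/-- Profit decomposition identity (Appendix, eq. (14)): under the dual
feasibility relations (6b)-(6e) of the SOCP market clearing problem and all
complementary slackness conditions (8a)-(8g), the nonlinear profit term
`Σ_t Σ_{i∈I_g} (λᵢᴾᵗ Pᵍᵗ + λᵢᑫᵗ Qᵍᵗ)` of the bidding generator equals a
linear expression in duals and constants. The time horizon is cyclic
(`Fin nT` with wraparound). -/
theorem profit_decomposition_identity
    {U B : Type*} [Fintype U] [Fintype B]
    (nT : ℕ) [NeZero nT] (Ig : Finset B)
    -- primal variables
    (Pu : U → Fin nT → ℝ) (Pg Qg : Fin nT → ℝ)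
    -- dual variables
    (lamSeg : Fin nT → ℝ)
    (μuLo μuHi : U → Fin nT → ℝ)
    (μrLo μrHi μPLo μPHi μQLo μQHi : Fin nT → ℝ)
    (lamP lamQ : B → Fin nT → ℝ)
    -- constants
    (C' : U → Fin nT → ℝ) (CQ : ℝ) (ρp ρm : U → ℝ)
    (PbarU : U → ℝ) (Plo Pbar Qlo Qbar Rd Ru : ℝ)
    -- primal feasibility: total dispatch is the sum of segment dispatches
    (hseg : ∀ t, Pg t = ∑ u, Pu u t)
    -- dual feasibility (6b)/(6c): segment dispatch dual constraint
    (hdualSeg : ∀ u t,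
      μuLo u t - μuHi u t + lamSeg t - ρp u * μQLo t + ρm u * μQHi t
        = C' u t)
    -- dual feasibility (6d)/(6e): total dispatch dual constraint (cyclic)
    (hdualPg : ∀ t : Fin nT,
      -lamSeg t + μrLo t - μrLo (t + 1) - μrHi t + μrHi (t + 1)
        + μPLo t - μPHi t + ∑ i ∈ Ig, lamP i t = 0)
    -- dual feasibility (6f): reactive dispatch dual constraint
    (hdualQg : ∀ t, μQLo t - μQHi t + ∑ i ∈ Ig, lamQ i t = CQ)
    -- complementary slackness (8a): segment capacity upper bound
    (hcsSegHi : ∀ u t, μuHi u t * Pu u t = μuHi u t * PbarU u)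
    -- complementary slackness (8b): segment lower bound
    (hcsSegLo : ∀ u t, μuLo u t * Pu u t = 0)
    -- complementary slackness (8c)/(8d): total capacity bounds
    (hcsPgHi : ∀ t, μPHi t * Pg t = μPHi t * Pbar)
    (hcsPgLo : ∀ t, μPLo t * Pg t = μPLo t * Plo)
    -- complementary slackness (8e)/(8f): cyclic ramping limits
    (hcsRampLo : ∀ t : Fin nT, μrLo t * (-Rd - Pg t + Pg (t - 1)) = 0)
    (hcsRampHi : ∀ t : Fin nT, μrHi t * (Pg t - Pg (t - 1) - Ru) = 0)
    -- complementary slackness (8g): reactive capability bounds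
    (hcsQLo : ∀ t, μQLo t * (Qg t - Qlo - ∑ u, ρp u * Pu u t) = 0)
    (hcsQHi : ∀ t, μQHi t * (Qbar + ∑ u, ρm u * Pu u t - Qg t) = 0) :
    ∑ t : Fin nT, ∑ i ∈ Ig, (lamP i t * Pg t + lamQ i t * Qg t) =
    ∑ t : Fin nT,
      (-(μQLo t * Qlo) + μQHi t * Qbar + CQ * Qg t
        + ∑ u, (μuHi u t * PbarU u + C' u t * Pu u t)
        + μrLo t * Rd + μrHi t * Ru
        - μPLo t * Plo + μPHi t * Pbar) := by
  -- sums of nodal duals from dual feasibility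
  have hP : ∀ t : Fin nT, ∑ i ∈ Ig, lamP i t
      = lamSeg t - μrLo t + μrLo (t+1) + μrHi t - μrHi (t+1) - μPLo t + μPHi t := by
    intro t; linarith [hdualPg t]
  have hQ : ∀ t, ∑ i ∈ Ig, lamQ i t = CQ - μQLo t + μQHi t := by
    intro t; linarith [hdualQg t]
  -- segment-price identity
  have hls : ∀ t, lamSeg t * Pg t
      = (∑ u, (μuHi u t * PbarU u + C' u t * Pu u t))
        + μQLo t * Qg t - μQLo t * Qlo - μQHi t * Qg t + μQHi t * Qbar := by
    intro t
    have h1 : lamSeg t * Pg t = ∑ u, (μuHi u t * PbarU u + C' u t * Pu u t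
        + μQLo t * (ρp u * Pu u t) - μQHi t * (ρm u * Pu u t)) := by
      rw [hseg t, Finset.mul_sum]
      refine Finset.sum_congr rfl fun u _ => ?_
      linear_combination Pu u t * hdualSeg u t - hcsSegLo u t + hcsSegHi u t
    have h2 : ∑ u, (μuHi u t * PbarU u + C' u t * Pu u t
        + μQLo t * (ρp u * Pu u t) - μQHi t * (ρm u * Pu u t))
      = (∑ u, (μuHi u t * PbarU u + C' u t * Pu u t))
        + μQLo t * (∑ u, ρp u * Pu u t) - μQHi t * (∑ u, ρm u * Pu u t) := by
      simp [Finset.sum_add_distrib, Finset.sum_sub_distrib, Finset.mul_sum]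
    rw [h1, h2]
    linear_combination -(hcsQLo t) - hcsQHi t
  -- cyclic shift for ramping duals
  have hshiftLo : ∑ t : Fin nT, μrLo (t+1) * Pg t = ∑ t : Fin nT, μrLo t * Pg (t-1) := by
    apply Fintype.sum_equiv (Equiv.addRight (1 : Fin nT))
    intro t; simp
  have hshiftHi : ∑ t : Fin nT, μrHi (t+1) * Pg t = ∑ t : Fin nT, μrHi t * Pg (t-1) := by
    apply Fintype.sum_equiv (Equiv.addRight (1 : Fin nT))
    intro t; simp
  have hramp : ∑ t : Fin nT, ((-μrLo t + μrLo (t+1) + μrHi t - μrHi (t+1)) * Pg t)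
      = ∑ t : Fin nT, (μrLo t * Rd + μrHi t * Ru) := by
    have e1 : ∑ t : Fin nT, ((-μrLo t + μrLo (t+1) + μrHi t - μrHi (t+1)) * Pg t)
        = (∑ t : Fin nT, μrLo (t+1) * Pg t) - (∑ t : Fin nT, μrHi (t+1) * Pg t)
          + ∑ t : Fin nT, ((-μrLo t + μrHi t) * Pg t) := by
      rw [← Finset.sum_sub_distrib, ← Finset.sum_add_distrib]
      exact Finset.sum_congr rfl fun t _ => by ring
    rw [e1, hshiftLo, hshiftHi, ← Finset.sum_sub_distrib, ← Finset.sum_add_distrib]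
    refine Finset.sum_congr rfl fun t _ => ?_
    linear_combination hcsRampLo t + hcsRampHi t
  calc ∑ t : Fin nT, ∑ i ∈ Ig, (lamP i t * Pg t + lamQ i t * Qg t)
      = ∑ t : Fin nT, ((∑ i ∈ Ig, lamP i t) * Pg t + (∑ i ∈ Ig, lamQ i t) * Qg t) := by
        refine Finset.sum_congr rfl fun t _ => ?_
        rw [Finset.sum_add_distrib, ← Finset.sum_mul, ← Finset.sum_mul]
    _ = ∑ t : Fin nT,
        ((-(μQLo t * Qlo) + μQHi t * Qbar + CQ * Qg t
          + ∑ u, (μuHi u t * PbarU u + C' u t * Pu u t)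
          - μPLo t * Plo + μPHi t * Pbar)
         + (-μrLo t + μrLo (t+1) + μrHi t - μrHi (t+1)) * Pg t) := by
        refine Finset.sum_congr rfl fun t _ => ?_
        rw [hP t, hQ t]
        linear_combination hls t - hcsPgLo t + hcsPgHi t
    _ = (∑ t : Fin nT,
        (-(μQLo t * Qlo) + μQHi t * Qbar + CQ * Qg t
          + ∑ u, (μuHi u t * PbarU u + C' u t * Pu u t)
          - μPLo t * Plo + μPHi t * Pbar))
        + ∑ t : Fin nT, ((-μrLo t + μrLo (t+1) + μrHi t - μrHi (t+1)) * Pg t) := by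
        rw [← Finset.sum_add_distrib]
    _ = _ := by
        rw [hramp, ← Finset.sum_add_distrib]
        exact Finset.sum_congr rfl fun t _ => by ring
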